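/- For all n, the number of permutations of [n] avoiding both generalized patterns 1-23 and 1-32 equals the number of involutions in the symmetric group S_n. -/
import Mathlib


def contains123 {n : ℕ} (π : Equiv.Perm (Fin n)) : Prop :=
  ∃ i j : ℕ, ∃ (_ : i < j) (hj : j + 1 < n),
    π ⟨i, by omega⟩ < π ⟨j, by omega⟩ ∧ π ⟨j, by omega⟩ < π ⟨j + 1, hj⟩

def contains132 {n : ℕ} (π : Equiv.Perm (Fin n)) : Prop :=
  ∃ i j : ℕ, ∃ (_ : i < j) (hj : j + 1 < n),
    π ⟨i, by omega⟩ < π ⟨j + 1, hj⟩ ∧ π ⟨j + 1, hj⟩ < π ⟨j, by omega⟩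

open Equiv

variable {m : ℕ}

def glue (p v : Fin (m + 1)) (τ : Perm (Fin m)) : Perm (Fin (m + 1)) :=
  (finSuccEquiv' p).trans ((τ.optionCongr).trans (finSuccEquiv' v).symm)

@[simp] lemma glue_pivot (p v : Fin (m + 1)) (τ : Perm (Fin m)) : glue p v τ p = v := by
  simp [glue, finSuccEquiv'_at, finSuccEquiv'_symm_none]

@[simp] lemma glue_succAbove (p v : Fin (m + 1)) (τ : Perm (Fin m)) (i : Fin m) :
    glue p v τ (p.succAbove i) = v.succAbove (τ i) := by
  simp [glue, finSuccEquiv'_succAbove, finSuccEquiv'_symm_some]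

def peel (p v : Fin (m + 1)) (π : Perm (Fin (m + 1))) (_ : π p = v) : Perm (Fin m) :=
  Equiv.removeNone ((finSuccEquiv' p).symm.trans (π.trans (finSuccEquiv' v)))

lemma peel_spec (p v : Fin (m + 1)) (π : Perm (Fin (m + 1))) (h : π p = v) (i : Fin m) :
    π (p.succAbove i) = v.succAbove (peel p v π h i) := by
  have he : ∃ x', ((finSuccEquiv' p).symm.trans (π.trans (finSuccEquiv' v))) (some i) = some x' := by
    simp only [Equiv.trans_apply, finSuccEquiv'_symm_some]
    have hne : π (p.succAbove i) ≠ v := by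
      rw [← h]
      exact fun hc => (Fin.succAbove_ne p i) (π.injective hc)
    rcases Fin.exists_succAbove_eq hne with ⟨z, hz⟩
    exact ⟨z, by rw [← hz, finSuccEquiv'_succAbove]⟩
  have := Equiv.removeNone_some _ he
  simp only [Equiv.trans_apply, finSuccEquiv'_symm_some] at this
  have := congrArg (finSuccEquiv' v).symm this.symm
  simpa [finSuccEquiv'_symm_some, peel] using this

lemma perm_eq_of_pivot (p : Fin (m + 1)) (π σ : Perm (Fin (m + 1)))
    (h : π p = σ p) (h2 : ∀ i, π (p.succAbove i) = σ (p.succAbove i)) : π = σ := by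
  apply Equiv.ext
  intro x
  rcases eq_or_ne x p with rfl | hx
  · exact h
  · rcases Fin.exists_succAbove_eq hx with ⟨i, rfl⟩
    exact h2 i

lemma peel_unique (p v : Fin (m + 1)) (π : Perm (Fin (m + 1))) (h : π p = v)
    (τ : Perm (Fin m)) (hc : ∀ i, π (p.succAbove i) = v.succAbove (τ i)) :
    peel p v π h = τ := by
  apply Equiv.ext
  intro i
  have h1 := peel_spec p v π h i
  rw [hc i] at h1
  exact Fin.succAbove_right_injective h1.symm

def Q {n : ℕ} (π : Perm (Fin n)) : Prop :=
  ∀ i j : ℕ, ∀ _ : i < j, ∀ hj : j + 1 < n,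
    ¬(π ⟨i, by omega⟩ < π ⟨j, by omega⟩ ∧ π ⟨i, by omega⟩ < π ⟨j + 1, hj⟩)

lemma avoid_iff {n : ℕ} (π : Perm (Fin n)) :
    (¬ contains123 π ∧ ¬ contains132 π) ↔ Q π := by
  constructor
  · rintro ⟨h1, h2⟩ i j hij hj ⟨ha, hb⟩
    have hne : π ⟨j, by omega⟩ ≠ π ⟨j + 1, hj⟩ := by
      intro he
      have := π.injective he
      rw [Fin.mk.injEq] at this
      omega
    rcases lt_or_gt_of_ne hne with h | h
    · exact h1 ⟨i, j, hij, hj, ha, h⟩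
    · exact h2 ⟨i, j, hij, hj, hb, h⟩
  · intro hQ
    constructor
    · rintro ⟨i, j, hij, hj, ha, hb⟩
      exact hQ i j hij hj ⟨ha, ha.trans hb⟩
    · rintro ⟨i, j, hij, hj, ha, hb⟩
      exact hQ i j hij hj ⟨ha.trans hb, ha⟩

lemma Q_iff {M N : ℕ} (hMN : M ≤ N) (π : Perm (Fin N)) (υ : Perm (Fin M))
    (g : Fin M → Fin N) (hg : StrictMono g)
    (hcomm : ∀ (k : ℕ) (hk : k < M), π ⟨k, by omega⟩ = g (υ ⟨k, hk⟩))
    (htail : ∀ i j : ℕ, ∀ _ : i < j, ∀ hj : j + 1 < N, M ≤ j + 1 →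
      ¬(π ⟨i, by omega⟩ < π ⟨j, by omega⟩ ∧ π ⟨i, by omega⟩ < π ⟨j + 1, hj⟩)) :
    Q π ↔ Q υ := by
  have key : ∀ (a b : ℕ) (ha : a < M) (hb : b < M),
      ((π ⟨a, by omega⟩ : Fin N) < π ⟨b, by omega⟩ ↔ υ ⟨a, ha⟩ < υ ⟨b, hb⟩) := by
    intro a b ha hb
    rw [hcomm a ha, hcomm b hb]
    exact hg.lt_iff_lt
  constructor
  · intro hQ i j hij hj
    rintro ⟨h1, h2⟩
    exact hQ i j hij (by omega)
      ⟨(key i j (by omega) (by omega)).mpr h1, (key i (j+1) (by omega) hj).mpr h2⟩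
  · intro hQ i j hij hj
    by_cases hM : j + 1 < M
    · rintro ⟨h1, h2⟩
      exact hQ i j hij hM
        ⟨(key i j (by omega) (by omega)).mp h1, (key i (j+1) (by omega) hM).mp h2⟩
    · exact htail i j hij hj (by omega)

lemma QA1 {n : ℕ} (π : Perm (Fin (n + 2))) (τ : Perm (Fin (n + 1)))
    (hL : π (Fin.last (n + 1)) = 0)
    (hcomm : ∀ (k : ℕ) (hk : k < n + 1),
      π ⟨k, by omega⟩ = (0 : Fin (n + 2)).succAbove (τ ⟨k, hk⟩)) :
    Q π ↔ Q τ := by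
  apply Q_iff (by omega) π τ _ (Fin.strictMono_succAbove 0) hcomm
  intro i j hij hj hM
  rintro ⟨h1, h2⟩
  have he : (⟨j + 1, hj⟩ : Fin (n + 2)) = Fin.last (n + 1) := by
    rw [Fin.ext_iff]; simp; omega
  rw [he, hL] at h2
  exact absurd h2 (Fin.not_lt_zero _)

lemma QA2 {n : ℕ} (π : Perm (Fin (n + 2))) (υ : Perm (Fin n)) (v : Fin (n + 2))
    (hL : π ⟨n, by omega⟩ = 0)
    (hcomm : ∀ (k : ℕ) (hk : k < n),
      π ⟨k, by omega⟩ = v.succAbove ((0 : Fin (n + 1)).succAbove (υ ⟨k, hk⟩))) :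
    Q π ↔ Q υ := by
  apply Q_iff (by omega) π υ (fun x => v.succAbove ((0 : Fin (n + 1)).succAbove x))
    (fun a b hab => (Fin.strictMono_succAbove v) ((Fin.strictMono_succAbove 0) hab)) hcomm
  intro i j hij hj hM
  rintro ⟨h1, h2⟩
  rcases (by omega : j + 1 = n ∨ j = n) with h | h
  · have he : (⟨j + 1, hj⟩ : Fin (n + 2)) = ⟨n, by omega⟩ := by rw [Fin.ext_iff]; simpa using h
    rw [he, hL] at h2
    exact absurd h2 (Fin.not_lt_zero _)
  · have he : (⟨j, by omega⟩ : Fin (n + 2)) = ⟨n, by omega⟩ := by rw [Fin.ext_iff]; simpa using h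
    rw [he, hL] at h1
    exact absurd h1 (Fin.not_lt_zero _)

lemma pos_n_of_Q {n : ℕ} (π : Perm (Fin (n + 2))) (hQ : Q π)
    (h : π (Fin.last (n + 1)) ≠ 0) : π ⟨n, by omega⟩ = 0 := by
  set p := π.symm 0 with hpdef
  have hp : π p = 0 := π.apply_symm_apply 0
  have hpn1 : p.val ≠ n + 1 := by
    intro hc
    apply h
    rw [← hp]
    congr 1
    exact Fin.ext hc.symm
  have hpn : p.val = n := by
    by_contra hc
    have hlt : p.val + 1 + 1 < n + 2 := by have := p.2; omega
    apply hQ p.val (p.val + 1) (by omega) hlt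
    have e0 : π ⟨p.val, by omega⟩ = 0 := by
      rw [show (⟨p.val, by omega⟩ : Fin (n + 2)) = p from Fin.ext rfl, hp]
    have key : ∀ (k : ℕ) (hk : k < n + 2), k ≠ p.val → 0 < π ⟨k, hk⟩ := by
      intro k hk hne
      rw [Fin.pos_iff_ne_zero]
      intro hc0
      have := π.injective (hc0.trans hp.symm)
      rw [Fin.ext_iff] at this
      exact hne this
    exact ⟨by rw [e0]; exact key _ _ (by omega), by rw [e0]; exact key _ _ (by omega)⟩
  rw [show (⟨n, by omega⟩ : Fin (n + 2)) = p from Fin.ext hpn.symm, hp]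

lemma dropA2_aux {n : ℕ} (π : Perm (Fin (n + 2))) (hL : π ⟨n, by omega⟩ = 0) :
    peel (Fin.last (n + 1)) (π (Fin.last (n + 1))) π rfl (Fin.last n) = 0 := by
  have hs := peel_spec (Fin.last (n + 1)) _ π rfl (Fin.last n)
  rw [Fin.succAbove_last,
    show Fin.castSucc (Fin.last n) = (⟨n, by omega⟩ : Fin (n + 2)) from rfl, hL] at hs
  have hv : π (Fin.last (n + 1)) ≠ 0 := by
    intro hc
    have := π.injective (hL.trans hc.symm)
    rw [Fin.ext_iff] at this
    simp at this
  have h0 : (π (Fin.last (n + 1))).succAbove 0 = 0 := Fin.succAbove_ne_zero_zero hv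
  exact Fin.succAbove_right_injective (hs.symm.trans h0.symm)

def dropA2 {n : ℕ} (π : Perm (Fin (n + 2))) (hL : π ⟨n, by omega⟩ = 0) : Perm (Fin n) :=
  peel (Fin.last n) 0 (peel (Fin.last (n + 1)) (π (Fin.last (n + 1))) π rfl) (dropA2_aux π hL)

lemma dropA2_spec {n : ℕ} (π : Perm (Fin (n + 2))) (hL : π ⟨n, by omega⟩ = 0)
    (k : ℕ) (hk : k < n) :
    π ⟨k, by omega⟩ =
      (π (Fin.last (n + 1))).succAbove ((0 : Fin (n + 1)).succAbove (dropA2 π hL ⟨k, hk⟩)) := by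
  have h2 := peel_spec (Fin.last n) 0 (peel (Fin.last (n + 1)) (π (Fin.last (n + 1))) π rfl)
    (dropA2_aux π hL) ⟨k, hk⟩
  have h1 := peel_spec (Fin.last (n + 1)) (π (Fin.last (n + 1))) π rfl
    ((Fin.last n).succAbove ⟨k, hk⟩)
  rw [h2] at h1
  rwa [Fin.succAbove_last, Fin.succAbove_last, Fin.castSucc_mk, Fin.castSucc_mk] at h1

def equivA (n : ℕ) :
    {π : Perm (Fin (n + 2)) // Q π} ≃
      ({τ : Perm (Fin (n + 1)) // Q τ} ⊕ Fin (n + 1) × {υ : Perm (Fin n) // Q υ}) where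
  toFun x :=
    if h : x.1 (Fin.last (n + 1)) = 0 then
      Sum.inl ⟨peel (Fin.last (n + 1)) 0 x.1 h, (QA1 x.1 _ h (fun k hk => by
        have := peel_spec (Fin.last (n + 1)) 0 x.1 h ⟨k, hk⟩
        rwa [Fin.succAbove_last, Fin.castSucc_mk] at this)).mp x.2⟩
    else
      Sum.inr ((x.1 (Fin.last (n + 1))).pred h,
        ⟨dropA2 x.1 (pos_n_of_Q x.1 x.2 h),
          (QA2 x.1 _ _ (pos_n_of_Q x.1 x.2 h)
            (dropA2_spec x.1 (pos_n_of_Q x.1 x.2 h))).mp x.2⟩)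
  invFun y :=
    match y with
    | Sum.inl ⟨τ, hτ⟩ =>
        ⟨glue (Fin.last (n + 1)) 0 τ, (QA1 _ τ (glue_pivot _ _ _) (fun k hk => by
          have := glue_succAbove (Fin.last (n + 1)) 0 τ ⟨k, hk⟩
          rwa [Fin.succAbove_last, Fin.castSucc_mk] at this)).mpr hτ⟩
    | Sum.inr (k, ⟨υ, hυ⟩) =>
        ⟨glue (Fin.last (n + 1)) k.succ (glue (Fin.last n) 0 υ),
          (QA2 _ υ k.succ (by
            have := glue_succAbove (Fin.last (n + 1)) k.succ (glue (Fin.last n) 0 υ) (Fin.last n)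
            rw [glue_pivot, Fin.succAbove_ne_zero_zero (Fin.succ_ne_zero k)] at this
            rwa [Fin.succAbove_last,
              show Fin.castSucc (Fin.last n) = (⟨n, by omega⟩ : Fin (n + 2)) from rfl] at this)
          (fun k' hk' => by
            have hpos : (⟨k', by omega⟩ : Fin (n + 2)) =
                (Fin.last (n + 1)).succAbove ((Fin.last n).succAbove ⟨k', hk'⟩) := by
              rw [Fin.succAbove_last, Fin.succAbove_last, Fin.castSucc_mk, Fin.castSucc_mk]
            rw [hpos, glue_succAbove, glue_succAbove])).mpr hυ⟩
  left_inv := by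
    rintro ⟨π, hQ⟩
    by_cases h : π (Fin.last (n + 1)) = 0
    · simp only [dif_pos h]
      apply Subtype.ext
      refine perm_eq_of_pivot (Fin.last (n + 1)) _ _ (by rw [glue_pivot, h]) (fun i => ?_)
      rw [glue_succAbove, peel_spec (Fin.last (n + 1)) 0 π h i]
    · simp only [dif_neg h]
      apply Subtype.ext
      show glue (Fin.last (n + 1)) ((π (Fin.last (n + 1))).pred h).succ
        (glue (Fin.last n) 0 (dropA2 π (pos_n_of_Q π hQ h))) = π
      rw [Fin.succ_pred]
      have hgp : glue (Fin.last n) 0 (dropA2 π (pos_n_of_Q π hQ h)) =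
          peel (Fin.last (n + 1)) (π (Fin.last (n + 1))) π rfl := by
        refine perm_eq_of_pivot (Fin.last n) _ _ ?_ (fun j => ?_)
        · rw [glue_pivot]
          exact (dropA2_aux π (pos_n_of_Q π hQ h)).symm
        · rw [glue_succAbove]
          exact (peel_spec (Fin.last n) 0 _ (dropA2_aux π (pos_n_of_Q π hQ h)) j).symm
      rw [hgp]
      refine perm_eq_of_pivot (Fin.last (n + 1)) _ _ (by rw [glue_pivot]) (fun i => ?_)
      rw [glue_succAbove, peel_spec (Fin.last (n + 1)) (π (Fin.last (n + 1))) π rfl i]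
  right_inv := by
    rintro (⟨τ, hτ⟩ | ⟨k, υ, hυ⟩)
    · dsimp only
      rw [dif_pos (glue_pivot _ _ _)]
      refine congrArg Sum.inl (Subtype.ext ?_)
      exact peel_unique _ _ _ (glue_pivot _ _ _) τ (fun i => glue_succAbove _ _ _ i)
    · dsimp only
      rw [dif_neg (show ¬ glue (Fin.last (n + 1)) k.succ (glue (Fin.last n) 0 υ)
        (Fin.last (n + 1)) = 0 by rw [glue_pivot]; exact Fin.succ_ne_zero k)]
      refine congrArg Sum.inr ?_
      have hval : glue (Fin.last (n + 1)) k.succ (glue (Fin.last n) 0 υ) (Fin.last (n + 1)) =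
        k.succ := glue_pivot _ _ _
      refine Prod.ext ?_ (Subtype.ext ?_)
      · simp only [hval, Fin.pred_succ]
      · apply peel_unique
        · have hs := peel_spec (Fin.last (n + 1))
            (glue (Fin.last (n + 1)) k.succ (glue (Fin.last n) 0 υ) (Fin.last (n + 1)))
            (glue (Fin.last (n + 1)) k.succ (glue (Fin.last n) 0 υ)) rfl (Fin.last n)
          rw [glue_succAbove, glue_pivot,
            Fin.succAbove_ne_zero_zero (Fin.succ_ne_zero k)] at hs
          have h0 : ((glue (Fin.last (n + 1)) k.succ (glue (Fin.last n) 0 υ))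
              (Fin.last (n + 1))).succAbove 0 = 0 :=
            Fin.succAbove_ne_zero_zero (by rw [hval]; exact Fin.succ_ne_zero k)
          exact Fin.succAbove_right_injective (hs.symm.trans h0.symm)
        · intro i
          have hs := peel_spec (Fin.last (n + 1))
            (glue (Fin.last (n + 1)) k.succ (glue (Fin.last n) 0 υ) (Fin.last (n + 1)))
            (glue (Fin.last (n + 1)) k.succ (glue (Fin.last n) 0 υ)) rfl
            ((Fin.last n).succAbove i)
          rw [glue_succAbove, glue_succAbove] at hs
          conv at hs => lhs; rw [← hval]
          exact (Fin.succAbove_right_injective hs).symm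

/-! ### Involutions -/

lemma perm_sq_iff {α : Type*} (σ : Perm α) : σ * σ = 1 ↔ ∀ x, σ (σ x) = x := by
  constructor
  · intro h x
    have := Equiv.ext_iff.mp h x
    simpa using this
  · intro h
    apply Equiv.ext
    intro x
    simpa using h x

lemma inv_transfer1 {m : ℕ} (σ : Perm (Fin (m + 1))) (p : Fin (m + 1)) (τ : Perm (Fin m))
    (hp : σ p = p) (hcomm : ∀ i, σ (p.succAbove i) = p.succAbove (τ i)) :
    σ * σ = 1 ↔ τ * τ = 1 := by
  rw [perm_sq_iff, perm_sq_iff]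
  constructor
  · intro h i
    have := h (p.succAbove i)
    rw [hcomm, hcomm] at this
    exact Fin.succAbove_right_injective this
  · intro h x
    rcases eq_or_ne x p with rfl | hx
    · rw [hp, hp]
    · rcases Fin.exists_succAbove_eq hx with ⟨i, rfl⟩
      rw [hcomm, hcomm, h]

lemma csk_last {n : ℕ} (k : Fin (n + 1)) :
    (Fin.castSucc k).succAbove (Fin.last n) = Fin.last (n + 1) := by
  rw [Fin.succAbove_of_le_castSucc _ _ (Fin.castSucc_le_castSucc_iff.mpr (Fin.le_last k)),
    Fin.succ_last]

lemma inv_transfer2 {n : ℕ} (σ : Perm (Fin (n + 2))) (k : Fin (n + 1)) (υ : Perm (Fin n))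
    (h1 : σ (Fin.last (n + 1)) = Fin.castSucc k)
    (h2 : σ (Fin.castSucc k) = Fin.last (n + 1))
    (hcomm : ∀ i, σ (Fin.castSucc (k.succAbove i)) = Fin.castSucc (k.succAbove (υ i))) :
    σ * σ = 1 ↔ υ * υ = 1 := by
  rw [perm_sq_iff, perm_sq_iff]
  constructor
  · intro h i
    have := h (Fin.castSucc (k.succAbove i))
    rw [hcomm, hcomm] at this
    exact Fin.succAbove_right_injective (Fin.castSucc_injective _ this)
  · intro h x
    rcases eq_or_ne x (Fin.last (n + 1)) with rfl | hx
    · rw [h1, h2]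
    · rcases Fin.exists_succAbove_eq hx with ⟨y, rfl⟩
      rw [Fin.succAbove_last_apply]
      rcases eq_or_ne y k with rfl | hy
      · rw [h2, h1]
      · rcases Fin.exists_succAbove_eq hy with ⟨i, rfl⟩
        rw [hcomm, hcomm, h]

lemma dropB2_aux {n : ℕ} (σ : Perm (Fin (n + 2))) (hinv : σ * σ = 1)
    (h : σ (Fin.last (n + 1)) ≠ Fin.last (n + 1)) :
    peel (Fin.last (n + 1)) (σ (Fin.last (n + 1))) σ rfl
      ((σ (Fin.last (n + 1))).castPred h) = Fin.last n := by
  have hσσ : σ (σ (Fin.last (n + 1))) = Fin.last (n + 1) :=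
    (perm_sq_iff σ).mp hinv _
  have hs := peel_spec (Fin.last (n + 1)) (σ (Fin.last (n + 1))) σ rfl
    ((σ (Fin.last (n + 1))).castPred h)
  rw [Fin.succAbove_last, Fin.castSucc_castPred, hσσ] at hs
  have hl : (σ (Fin.last (n + 1))).succAbove (Fin.last n) = Fin.last (n + 1) := by
    conv_lhs => rw [← Fin.castSucc_castPred _ h]
    exact csk_last _
  exact Fin.succAbove_right_injective (hs.symm.trans hl.symm)

def dropB2 {n : ℕ} (σ : Perm (Fin (n + 2))) (hinv : σ * σ = 1)
    (h : σ (Fin.last (n + 1)) ≠ Fin.last (n + 1)) : Perm (Fin n) :=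
  peel ((σ (Fin.last (n + 1))).castPred h) (Fin.last n)
    (peel (Fin.last (n + 1)) (σ (Fin.last (n + 1))) σ rfl) (dropB2_aux σ hinv h)

lemma dropB2_spec {n : ℕ} (σ : Perm (Fin (n + 2))) (hinv : σ * σ = 1)
    (h : σ (Fin.last (n + 1)) ≠ Fin.last (n + 1)) (i : Fin n) :
    σ (Fin.castSucc (((σ (Fin.last (n + 1))).castPred h).succAbove i)) =
      Fin.castSucc (((σ (Fin.last (n + 1))).castPred h).succAbove (dropB2 σ hinv h i)) := by
  have h2 := peel_spec ((σ (Fin.last (n + 1))).castPred h) (Fin.last n)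
    (peel (Fin.last (n + 1)) (σ (Fin.last (n + 1))) σ rfl) (dropB2_aux σ hinv h) i
  have h1 := peel_spec (Fin.last (n + 1)) (σ (Fin.last (n + 1))) σ rfl
    (((σ (Fin.last (n + 1))).castPred h).succAbove i)
  rw [Fin.succAbove_last] at h1
  rw [h2, Fin.succAbove_last] at h1
  rw [h1]
  rw [show (σ (Fin.last (n + 1))).succAbove =
    (Fin.castSucc ((σ (Fin.last (n + 1))).castPred h)).succAbove from by
      rw [Fin.castSucc_castPred]]
  rw [Fin.castSucc_succAbove_castSucc]
  rfl

lemma invol_apply_self {n : ℕ} (σ : Perm (Fin (n + 2))) (hinv : σ * σ = 1)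
    (h : σ (Fin.last (n + 1)) ≠ Fin.last (n + 1)) :
    σ (Fin.castSucc ((σ (Fin.last (n + 1))).castPred h)) = Fin.last (n + 1) := by
  rw [Fin.castSucc_castPred]
  exact (perm_sq_iff σ).mp hinv _

def equivB (n : ℕ) :
    {σ : Perm (Fin (n + 2)) // σ * σ = 1} ≃
      ({τ : Perm (Fin (n + 1)) // τ * τ = 1} ⊕ Fin (n + 1) × {υ : Perm (Fin n) // υ * υ = 1}) where
  toFun x :=
    if h : x.1 (Fin.last (n + 1)) = Fin.last (n + 1) then
      Sum.inl ⟨peel (Fin.last (n + 1)) (Fin.last (n + 1)) x.1 h,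
        (inv_transfer1 x.1 _ _ h (fun i => peel_spec _ _ x.1 h i)).mp x.2⟩
    else
      Sum.inr ((x.1 (Fin.last (n + 1))).castPred h,
        ⟨dropB2 x.1 x.2 h,
          (inv_transfer2 x.1 _ _ (Fin.castSucc_castPred _ h).symm
            (invol_apply_self x.1 x.2 h) (dropB2_spec x.1 x.2 h)).mp x.2⟩)
  invFun y :=
    match y with
    | Sum.inl ⟨τ, hτ⟩ =>
        ⟨glue (Fin.last (n + 1)) (Fin.last (n + 1)) τ,
          (inv_transfer1 _ _ τ (glue_pivot _ _ _) (fun i => glue_succAbove _ _ _ i)).mpr hτ⟩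
    | Sum.inr (k, ⟨υ, hυ⟩) =>
        ⟨glue (Fin.last (n + 1)) (Fin.castSucc k) (glue k (Fin.last n) υ),
          (inv_transfer2 _ k υ (glue_pivot _ _ _)
            (by
              have := glue_succAbove (Fin.last (n + 1)) (Fin.castSucc k)
                (glue k (Fin.last n) υ) k
              rwa [Fin.succAbove_last_apply, glue_pivot, csk_last] at this)
            (fun i => by
              have := glue_succAbove (Fin.last (n + 1)) (Fin.castSucc k)
                (glue k (Fin.last n) υ) (k.succAbove i)
              rwa [Fin.succAbove_last_apply, glue_succAbove, Fin.succAbove_last_apply,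
                Fin.castSucc_succAbove_castSucc] at this)).mpr hυ⟩
  left_inv := by
    rintro ⟨σ, hinv⟩
    by_cases h : σ (Fin.last (n + 1)) = Fin.last (n + 1)
    · simp only [dif_pos h]
      apply Subtype.ext
      refine perm_eq_of_pivot (Fin.last (n + 1)) _ _ (by rw [glue_pivot, h]) (fun i => ?_)
      rw [glue_succAbove, peel_spec (Fin.last (n + 1)) (Fin.last (n + 1)) σ h i]
    · simp only [dif_neg h]
      apply Subtype.ext
      show glue (Fin.last (n + 1)) (Fin.castSucc ((σ (Fin.last (n + 1))).castPred h))
        (glue ((σ (Fin.last (n + 1))).castPred h) (Fin.last n) (dropB2 σ hinv h)) = σ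
      rw [Fin.castSucc_castPred]
      have hgp : glue ((σ (Fin.last (n + 1))).castPred h) (Fin.last n) (dropB2 σ hinv h) =
          peel (Fin.last (n + 1)) (σ (Fin.last (n + 1))) σ rfl := by
        refine perm_eq_of_pivot ((σ (Fin.last (n + 1))).castPred h) _ _ ?_ (fun j => ?_)
        · rw [glue_pivot]
          exact (dropB2_aux σ hinv h).symm
        · rw [glue_succAbove]
          exact (peel_spec _ (Fin.last n) _ (dropB2_aux σ hinv h) j).symm
      rw [hgp]
      refine perm_eq_of_pivot (Fin.last (n + 1)) _ _ (by rw [glue_pivot]) (fun i => ?_)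
      rw [glue_succAbove, peel_spec (Fin.last (n + 1)) (σ (Fin.last (n + 1))) σ rfl i]
  right_inv := by
    rintro (⟨τ, hτ⟩ | ⟨k, υ, hυ⟩)
    · dsimp only
      rw [dif_pos (glue_pivot _ _ _)]
      refine congrArg Sum.inl (Subtype.ext ?_)
      exact peel_unique _ _ _ (glue_pivot _ _ _) τ (fun i => glue_succAbove _ _ _ i)
    · dsimp only
      have hval : glue (Fin.last (n + 1)) (Fin.castSucc k) (glue k (Fin.last n) υ)
          (Fin.last (n + 1)) = Fin.castSucc k := glue_pivot _ _ _
      have hne : glue (Fin.last (n + 1)) (Fin.castSucc k) (glue k (Fin.last n) υ)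
          (Fin.last (n + 1)) ≠ Fin.last (n + 1) := by
        rw [hval]; exact (Fin.castSucc_lt_last k).ne
      rw [dif_neg hne]
      refine congrArg Sum.inr ?_
      have hk' : ∀ h', (glue (Fin.last (n + 1)) (Fin.castSucc k) (glue k (Fin.last n) υ)
          (Fin.last (n + 1))).castPred h' = k := by
        intro h'
        apply Fin.castSucc_injective
        rw [Fin.castSucc_castPred, hval]
      refine Prod.ext (hk' hne) (Subtype.ext ?_)
      apply peel_unique
      · rw [hk']
        have hs := peel_spec (Fin.last (n + 1))
          (glue (Fin.last (n + 1)) (Fin.castSucc k) (glue k (Fin.last n) υ) (Fin.last (n + 1)))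
          (glue (Fin.last (n + 1)) (Fin.castSucc k) (glue k (Fin.last n) υ)) rfl k
        rw [glue_succAbove, glue_pivot, csk_last] at hs
        have hl : (glue (Fin.last (n + 1)) (Fin.castSucc k) (glue k (Fin.last n) υ)
            (Fin.last (n + 1))).succAbove (Fin.last n) = Fin.last (n + 1) := by
          rw [hval]; exact csk_last k
        exact Fin.succAbove_right_injective (hs.symm.trans hl.symm)
      · intro i
        rw [hk']
        have hs := peel_spec (Fin.last (n + 1))
          (glue (Fin.last (n + 1)) (Fin.castSucc k) (glue k (Fin.last n) υ) (Fin.last (n + 1)))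
          (glue (Fin.last (n + 1)) (Fin.castSucc k) (glue k (Fin.last n) υ)) rfl (k.succAbove i)
        rw [glue_succAbove, glue_succAbove, Fin.succAbove_last,
          Fin.castSucc_succAbove_castSucc] at hs
        have hs2 : (glue (Fin.last (n + 1)) (Fin.castSucc k) (glue k (Fin.last n) υ)
            (Fin.last (n + 1))).succAbove (Fin.castSucc (υ i)) =
            Fin.castSucc (k.succAbove (υ i)) := by
          rw [hval, Fin.castSucc_succAbove_castSucc]
        rw [Fin.succAbove_last]
        exact (Fin.succAbove_right_injective (hs2.trans hs)).symm

/-! ### Counting -/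

lemma cardA (n : ℕ) :
    Nat.card {π : Perm (Fin (n + 2)) // Q π} =
      Nat.card {τ : Perm (Fin (n + 1)) // Q τ} +
        (n + 1) * Nat.card {υ : Perm (Fin n) // Q υ} := by
  rw [Nat.card_congr (equivA n), Nat.card_sum, Nat.card_prod,
    Nat.card_eq_fintype_card (α := Fin (n + 1)), Fintype.card_fin]

lemma cardB (n : ℕ) :
    Nat.card {σ : Perm (Fin (n + 2)) // σ * σ = 1} =
      Nat.card {τ : Perm (Fin (n + 1)) // τ * τ = 1} +
        (n + 1) * Nat.card {υ : Perm (Fin n) // υ * υ = 1} := by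
  rw [Nat.card_congr (equivB n), Nat.card_sum, Nat.card_prod,
    Nat.card_eq_fintype_card (α := Fin (n + 1)), Fintype.card_fin]

theorem main_count : ∀ n : ℕ,
    Nat.card {π : Perm (Fin n) // Q π} = Nat.card {σ : Perm (Fin n) // σ * σ = 1} := by
  intro n
  induction n using Nat.strong_induction_on with
  | _ n ih =>
    match n with
    | 0 =>
        rw [Nat.card_congr (Equiv.subtypeUnivEquiv
            (fun π => show Q π from fun i j _ hj => absurd hj (by omega))),
          Nat.card_congr (Equiv.subtypeUnivEquiv
            (fun σ => Equiv.ext fun x => (x : Fin 0).elim0))]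
    | 1 =>
        rw [Nat.card_congr (Equiv.subtypeUnivEquiv
            (fun π => show Q π from fun i j _ hj => absurd hj (by omega))),
          Nat.card_congr (Equiv.subtypeUnivEquiv
            (fun σ => Equiv.ext fun x => Subsingleton.elim _ _))]
    | (m + 2) =>
        rw [cardA, cardB, ih (m + 1) (by omega), ih m (by omega)]

theorem stmt13 (n : ℕ) :
    Nat.card {π : Equiv.Perm (Fin n) // ¬ contains123 π ∧ ¬ contains132 π} =
    Nat.card {σ : Equiv.Perm (Fin n) // σ * σ = 1} := by
  rw [Nat.card_congr (Equiv.subtypeEquivRight (fun π => avoid_iff π))]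
  exact main_count n
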